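/- Let k > 0, let D ⊂ ℝ³ be a bounded open set, let F : ℝ³ → ℂ³ and h : ℝ³ → ℂ be continuous with support contained in D, and define u(x) := ∫_D g(x,y) F(y) dy + ∇ₓ ∫_D g(x,y) h(y) dy. Then there exist C > 0 and R₁ > 0 such that for all x with |x| ≥ R₁, writing β := x/|x|: | u(x) − (e^{ik|x|}/(4π|x|))·( ∫_D e^{−ikβ·y} F(y) dy + ikβ ∫_D e^{−ikβ·y} h(y) dy ) | ≤ C/|x|². -/

import Mathlib

/- STATEMENT 13: Far-field expansion of the field
u(x) = ∫_D g(x,y) F(y) dy + ∇ₓ ∫_D g(x,y) h(y) dy :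
there are C > 0, R₁ > 0 such that for |x| ≥ R₁, with β = x/|x|,
| u(x) − (e^{ik|x|}/(4π|x|)) ( ∫_D e^{−ikβ·y}F(y) dy + ikβ ∫_D e^{−ikβ·y}h(y) dy ) |
  ≤ C/|x|². -/

noncomputable section

open Real Complex MeasureTheory

abbrev R3 : Type := EuclideanSpace ℝ (Fin 3)

/-- Partial derivative ∂ᵢ of a scalar function. -/
def pd (i : Fin 3) (f : R3 → ℂ) (x : R3) : ℂ :=
  fderiv ℝ f x (EuclideanSpace.single i (1 : ℝ))

/-- The weakly singular kernel g(x,y) = e^{ik|x−y|}/(4π|x−y|). -/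
def g (k : ℝ) (x y : R3) : ℂ :=
  Complex.exp (Complex.I * (k : ℂ) * (‖x - y‖ : ℝ)) / (4 * (Real.pi : ℂ) * (‖x - y‖ : ℝ))

/-! For `‖y‖ ≤ M ≤ ‖x‖ / 2` write `r = ‖x - y‖`, `R = ‖x‖`, `β = x / R`. Expanding
`r² = R² - 2 R (β·y) + ‖y‖²` gives `|r - (R - β·y)| ≤ ‖y‖² / R`, so
`g(x,y) = e^{ikr}/(4πr)` differs from `e^{ikR} e^{-ikβ·y}/(4πR)` by `O(R⁻²)` uniformly in `y ∈ D`.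
The same holds for `∇ₓ g(x,y) = (ik - 1/r) g(x,y) (x - y)/r` against `ikβ` times that kernel,
since `(x - y)/r - β = O(R⁻¹)`. As `x` stays away from `D ⊆ closedBall 0 M`, the gradient can
be taken under the integral sign, and integrating the pointwise bounds against `|F|`, `|h|` gives
the estimate. -/

def gRadial (k t : ℝ) : ℂ :=
  Complex.exp (Complex.I * k * t) / (4 * π * t)

def gRadialDeriv (k t : ℝ) : ℂ :=
  (Complex.I * k - 1 / t) * gRadial k t

lemma g_eq_gRadial (k : ℝ) (x y : R3) : g k x y = gRadial k ‖x - y‖ := rfl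

lemma norm_exp_I_mul_sub_exp_I_mul_le (a b : ℝ) :
    ‖Complex.exp (Complex.I * a) - Complex.exp (Complex.I * b)‖ ≤ |a - b| := by
  have hsplit : Complex.exp (Complex.I * a) - Complex.exp (Complex.I * b)
      = Complex.exp (Complex.I * b) * (Complex.exp (Complex.I * ↑(a - b)) - 1) := by
    rw [mul_sub, ← Complex.exp_add]; push_cast; ring_nf
  rw [hsplit, norm_mul, norm_exp_I_mul_ofReal, one_mul]
  exact norm_exp_I_mul_ofReal_sub_one_le

lemma hasDerivAt_gRadial (k : ℝ) {t : ℝ} (ht : t ≠ 0) :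
    HasDerivAt (gRadial k) (gRadialDeriv k t) t := by
  have hphase : HasDerivAt (fun s : ℝ => Complex.exp (Complex.I * k * s))
      (Complex.exp (Complex.I * k * t) * (Complex.I * k)) t := by
    simpa using ((Complex.ofRealCLM.hasDerivAt (x := t)).const_mul (Complex.I * k)).cexp
  have hden : HasDerivAt (fun s : ℝ => 4 * (π : ℂ) * s) (4 * π) t := by
    simpa using (Complex.ofRealCLM.hasDerivAt (x := t)).const_mul (4 * (π : ℂ))
  have ht' : (t : ℂ) ≠ 0 := by exact_mod_cast ht
  have hne : (4 * π * t : ℂ) ≠ 0 := by simp [Real.pi_ne_zero, ht]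
  refine (hphase.div hden hne).congr_deriv ?_
  simp only [gRadialDeriv, gRadial]
  field_simp

lemma norm_gRadial (k t : ℝ) : ‖gRadial k t‖ = (4 * π * |t|)⁻¹ := by
  rw [gRadial, norm_div, mul_assoc, ← Complex.ofReal_mul, Complex.norm_exp_I_mul_ofReal]
  simp [abs_of_pos Real.pi_pos]

lemma norm_gRadialDeriv_le_of_le (k : ℝ) {δ t : ℝ} (hδ : 0 < δ) (ht : δ ≤ t) :
    ‖gRadialDeriv k t‖ ≤ (|k| + δ⁻¹) * (4 * π * δ)⁻¹ := by
  have ht0 : 0 < t := hδ.trans_le ht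
  rw [gRadialDeriv, norm_mul, norm_gRadial, abs_of_pos ht0]
  gcongr
  calc ‖Complex.I * k - 1 / t‖ ≤ ‖Complex.I * k‖ + ‖(1 / t : ℂ)‖ := norm_sub_le _ _
    _ = |k| + t⁻¹ := by simp [abs_of_pos ht0]
    _ ≤ |k| + δ⁻¹ := by gcongr

lemma hasFDerivAt_norm_sub {E : Type*} [NormedAddCommGroup E] [InnerProductSpace ℝ E]
    {x y : E} (hxy : x ≠ y) :
    HasFDerivAt (fun z => ‖z - y‖) (‖x - y‖⁻¹ • innerSL ℝ (x - y)) x := by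
  have hr : 0 < ‖x - y‖ := norm_pos_iff.mpr (sub_ne_zero.mpr hxy)
  have hsq := ((hasFDerivAt_id x).sub_const y).norm_sq
  have hsqrt := (Real.hasDerivAt_sqrt (pow_pos hr 2).ne').comp_hasFDerivAt x hsq
  simp only [Function.comp_def, Real.sqrt_sq (norm_nonneg _)] at hsqrt
  refine hsqrt.congr_fderiv ?_
  ext v
  simp
  field_simp

def gGrad (k : ℝ) (x y : R3) : R3 →L[ℝ] ℂ :=
  (‖x - y‖⁻¹ • innerSL ℝ (x - y)).smulRight (gRadialDeriv k ‖x - y‖)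

lemma hasFDerivAt_g (k : ℝ) {x y : R3} (hxy : x ≠ y) :
    HasFDerivAt (fun z => g k z y) (gGrad k x y) x := by
  have hr : ‖x - y‖ ≠ 0 := norm_ne_zero_iff.mpr (sub_ne_zero.mpr hxy)
  refine ((hasDerivAt_gRadial k hr).hasFDerivAt.comp x (hasFDerivAt_norm_sub hxy)).congr_fderiv ?_
  ext v
  simp [gGrad]
  ring

lemma gGrad_single (k : ℝ) (x y : R3) (i : Fin 3) :
    gGrad k x y (EuclideanSpace.single i 1)
      = (((x i - y i) / ‖x - y‖ : ℝ) : ℂ) * gRadialDeriv k ‖x - y‖ := by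
  simp [gGrad, EuclideanSpace.inner_single_right, div_eq_inv_mul]

lemma norm_gGrad_le (k : ℝ) (x y : R3) : ‖gGrad k x y‖ ≤ ‖gRadialDeriv k ‖x - y‖‖ := by
  rw [gGrad, ContinuousLinearMap.norm_smulRight_apply]
  refine mul_le_of_le_one_left (norm_nonneg _) ?_
  rw [norm_smul, innerSL_apply_norm, norm_inv, norm_norm]
  exact inv_mul_le_one_of_le₀ le_rfl (norm_nonneg _)

lemma continuousAt_gRadialDeriv (k : ℝ) {t : ℝ} (ht : t ≠ 0) : ContinuousAt (gRadialDeriv k) t :=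
  (continuousAt_const.sub (continuousAt_const.div Complex.continuous_ofReal.continuousAt
    (by exact_mod_cast ht))).mul (hasDerivAt_gRadial k ht).continuousAt

lemma continuousOn_g (k : ℝ) {x : R3} {K : Set R3} (hx : x ∉ K) : ContinuousOn (g k x) K := by
  refine continuousOn_of_forall_continuousAt fun y hy => ?_
  have hr : ‖x - y‖ ≠ 0 := norm_ne_zero_iff.mpr (sub_ne_zero.mpr (ne_of_mem_of_not_mem hy hx).symm)
  show ContinuousAt (gRadial k ∘ fun y => ‖x - y‖) y
  exact (hasDerivAt_gRadial k hr).continuousAt.comp (f := fun y => ‖x - y‖) (by fun_prop)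

lemma continuousOn_gGrad (k : ℝ) {x : R3} {K : Set R3} (hx : x ∉ K) :
    ContinuousOn (gGrad k x) K := by
  refine continuousOn_of_forall_continuousAt fun y hy => ?_
  have hr : ‖x - y‖ ≠ 0 := norm_ne_zero_iff.mpr (sub_ne_zero.mpr (ne_of_mem_of_not_mem hy hx).symm)
  have hderiv : ContinuousAt (fun y => gRadialDeriv k ‖x - y‖) y :=
    (continuousAt_gRadialDeriv k hr).comp (f := fun y => ‖x - y‖) (by fun_prop)
  have hdir : ContinuousAt (fun y => ‖x - y‖⁻¹ • innerSL ℝ (x - y)) y :=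
    ((continuous_const.sub continuous_id).norm.continuousAt.inv₀ hr).smul (by fun_prop)
  exact (ContinuousLinearMap.smulRightL ℝ R3 ℂ).continuous₂.continuousAt.comp
    (f := fun y => (_, _)) (hdir.prodMk hderiv)

lemma hasFDerivAt_integral_g_mul (k : ℝ) {s K : Set R3} (hs : MeasurableSet s) (hK : IsCompact K)
    (hsK : s ⊆ K) {φ : R3 → ℂ} (hφ : ContinuousOn φ K) {x : R3} (hx : x ∉ K) :
    HasFDerivAt (fun z => ∫ y in s, g k z y * φ y) (∫ y in s, φ y • gGrad k x y) x := by
  obtain ⟨ε, hε, hballK⟩ := Metric.isOpen_iff.mp hK.isClosed.isOpen_compl x hx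
  have hε2 := half_pos hε
  have hsep : ∀ z ∈ Metric.ball x (ε / 2), ∀ y ∈ K, ε / 2 ≤ ‖z - y‖ := by
    intro z hz y hy
    have hxy : ε ≤ dist y x := not_lt.mp fun h => hballK h hy
    rw [← dist_eq_norm]
    linarith [dist_triangle y z x, dist_comm y z, Metric.mem_ball.mp hz]
  have hnotK : ∀ z ∈ Metric.ball x (ε / 2), z ∉ K := fun z hz hzK => by
    simpa using (hsep z hz z hzK).trans_lt' hε2
  have hint : ∀ z ∉ K, IntegrableOn (fun y => g k z y * φ y) s := fun z hz =>
    (((continuousOn_g k hz).mul hφ).integrableOn_compact hK).mono_set hsK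
  refine hasFDerivAt_integral_of_dominated_of_fderiv_le (Metric.ball_mem_nhds x hε2)
    (F := fun z y => g k z y * φ y) (F' := fun z y => φ y • gGrad k z y)
    (bound := fun y => ‖φ y‖ * ((|k| + (ε / 2)⁻¹) * (4 * π * (ε / 2))⁻¹))
    ?_ (hint x hx) ?_ ?_ ?_ ?_
  · filter_upwards [Metric.ball_mem_nhds x hε2] with z hz
    exact (hint z (hnotK z hz)).aestronglyMeasurable
  · exact ((hφ.smul (continuousOn_gGrad k hx)).integrableOn_compact hK).mono_set hsK
      |>.aestronglyMeasurable
  · refine ae_restrict_of_forall_mem hs fun y hy z hz => ?_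
    rw [norm_smul]
    gcongr
    exact (norm_gGrad_le k z y).trans (norm_gRadialDeriv_le_of_le k hε2 (hsep z hz y (hsK hy)))
  · exact ((hφ.integrableOn_compact hK).mono_set hsK).norm.mul_const _
  · refine ae_restrict_of_forall_mem hs fun y hy z hz => ?_
    exact (hasFDerivAt_g k (ne_of_mem_of_not_mem (hsK hy) (hnotK z hz)).symm).mul_const (φ y)

lemma pd_integral_g_mul (k : ℝ) {s K : Set R3} (hs : MeasurableSet s) (hK : IsCompact K)
    (hsK : s ⊆ K) {φ : R3 → ℂ} (hφ : ContinuousOn φ K) {x : R3} (hx : x ∉ K) (i : Fin 3) :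
    pd i (fun z => ∫ y in s, g k z y * φ y) x
      = ∫ y in s, gGrad k x y (EuclideanSpace.single i 1) * φ y := by
  have hint : IntegrableOn (fun y => φ y • gGrad k x y) s :=
    ((hφ.smul (continuousOn_gGrad k hx)).integrableOn_compact hK).mono_set hsK
  rw [pd, (hasFDerivAt_integral_g_mul k hs hK hsK hφ hx).fderiv,
    ContinuousLinearMap.integral_apply hint]
  simp only [smul_apply, smul_eq_mul, mul_comm]

lemma norm_gRadial_sub_gRadial_mul_exp_le {k r R : ℝ} (hk : 0 ≤ k) (hr : 0 < r) (hR : 0 < R)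
    (θ : ℝ) :
    ‖gRadial k r - gRadial k R * Complex.exp (-(Complex.I * k) * θ)‖
      ≤ (|R - r| / r + k * |r - (R - θ)|) / (4 * π * R) := by
  have hsplit : gRadial k r - gRadial k R * Complex.exp (-(Complex.I * k) * θ)
      = (Complex.exp (Complex.I * ↑(k * r)) * ↑((R - r) / r)
          + (Complex.exp (Complex.I * ↑(k * r)) - Complex.exp (Complex.I * ↑(k * (R - θ)))))
        / ↑(4 * π * R) := by
    have hr' : (r : ℂ) ≠ 0 := by exact_mod_cast hr.ne'
    have hR' : (R : ℂ) ≠ 0 := by exact_mod_cast hR.ne'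
    have hphase : Complex.I * ↑(k * (R - θ)) = Complex.I * k * R + -(Complex.I * k) * θ := by
      push_cast; ring
    simp only [gRadial, hphase, Complex.exp_add]
    push_cast
    field_simp
    ring_nf
  rw [hsplit, norm_div, Complex.norm_real, Real.norm_of_nonneg (by positivity)]
  gcongr
  calc _ ≤ ‖Complex.exp (Complex.I * ↑(k * r)) * ↑((R - r) / r)‖
        + ‖Complex.exp (Complex.I * ↑(k * r)) - Complex.exp (Complex.I * ↑(k * (R - θ)))‖ :=
        norm_add_le _ _
    _ ≤ |R - r| / r + |k * r - k * (R - θ)| := by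
        rw [norm_mul, Complex.norm_exp_I_mul_ofReal, one_mul, Complex.norm_real, Real.norm_eq_abs,
          abs_div, abs_of_pos hr]
        gcongr
        exact norm_exp_I_mul_sub_exp_I_mul_le _ _
    _ = |R - r| / r + k * |r - (R - θ)| := by rw [← mul_sub, abs_mul, abs_of_nonneg hk]

lemma norm_mul_gRadialDeriv_sub_le {k r a b : ℝ} (hk : 0 ≤ k) (hr : 0 < r) (ha : |a| ≤ 1)
    (Q : ℂ) :
    ‖a * gRadialDeriv k r - Complex.I * k * b * Q‖
      ≤ k * (‖gRadial k r - Q‖ + |a - b| * ‖Q‖) + (4 * π * r ^ 2)⁻¹ := by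
  have hsplit : a * gRadialDeriv k r - Complex.I * k * b * Q
      = Complex.I * k * (a * (gRadial k r - Q) + ↑(a - b) * Q) - a * gRadial k r / r := by
    simp only [gRadialDeriv]
    push_cast
    ring
  have hP : ‖a * gRadial k r / r‖ ≤ (4 * π * r ^ 2)⁻¹ := by
    rw [norm_div, norm_mul, norm_gRadial, Complex.norm_real, Complex.norm_real, Real.norm_eq_abs,
      Real.norm_eq_abs, abs_of_pos hr, div_le_iff₀ hr]
    calc |a| * (4 * π * r)⁻¹ ≤ 1 * (4 * π * r)⁻¹ := by gcongr
      _ = (4 * π * r ^ 2)⁻¹ * r := by field_simp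
  rw [hsplit]
  refine (norm_sub_le _ _).trans (add_le_add ?_ hP)
  rw [norm_mul, norm_mul, Complex.norm_I, one_mul, Complex.norm_real, Real.norm_of_nonneg hk]
  gcongr
  refine (norm_add_le _ _).trans ?_
  rw [norm_mul, norm_mul, Complex.norm_real, Complex.norm_real, Real.norm_eq_abs, Real.norm_eq_abs]
  gcongr
  exact mul_le_of_le_one_left (norm_nonneg _) ha

lemma abs_norm_sub_sub_inner_div_le {E : Type*} [NormedAddCommGroup E] [InnerProductSpace ℝ E]
    {x y : E} (h : 2 * ‖y‖ ≤ ‖x‖) :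
    |‖x - y‖ - (‖x‖ - inner ℝ x y / ‖x‖)| ≤ ‖y‖ ^ 2 / ‖x‖ := by
  rcases (norm_nonneg x).eq_or_lt with hx | hR
  · have hy : y = 0 := norm_eq_zero.mp (by linarith [norm_nonneg y])
    simp [hy, ← hx]
  set R := ‖x‖
  set r := ‖x - y‖
  set q := inner ℝ x y / R with hq_def
  have hq : |q| ≤ ‖y‖ := by
    rw [hq_def, abs_div, abs_of_pos hR, div_le_iff₀ hR, mul_comm]
    exact abs_real_inner_le_norm x y
  have hr2 : r ^ 2 = R ^ 2 - 2 * q * R + ‖y‖ ^ 2 := by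
    rw [norm_sub_sq_real, hq_def]
    field_simp
    rfl
  have hr : R - ‖y‖ ≤ r := norm_sub_norm_le x y
  obtain ⟨hq1, hq2⟩ := abs_le.mp hq
  have hlow : 0 ≤ r - (R - q) := by nlinarith [norm_nonneg y]
  refine abs_le.mpr ⟨le_trans (by rw [neg_nonpos]; positivity) hlow, ?_⟩
  rw [le_div_iff₀ hR]
  nlinarith [mul_le_mul_of_nonneg_left (show R ≤ r + (R - q) by linarith) hlow, sq_nonneg q]

lemma norm_inv_norm_smul_sub_inv_norm_smul_le {E : Type*} [NormedAddCommGroup E]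
    [NormedSpace ℝ E] {v w : E} (hv : v ≠ 0) (hw : w ≠ 0) :
    ‖‖v‖⁻¹ • v - ‖w‖⁻¹ • w‖ ≤ 2 * ‖v - w‖ / ‖w‖ := by
  have hv' : 0 < ‖v‖ := norm_pos_iff.mpr hv
  have hw' : 0 < ‖w‖ := norm_pos_iff.mpr hw
  have hsplit : ‖v‖⁻¹ • v - ‖w‖⁻¹ • w = ‖w‖⁻¹ • (v - w) + (‖v‖⁻¹ - ‖w‖⁻¹) • v := by
    rw [smul_sub, sub_smul]; abel
  have hscale : |‖v‖⁻¹ - ‖w‖⁻¹| * ‖v‖ = |‖w‖ - ‖v‖| / ‖w‖ := by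
    rw [← abs_of_pos hv', ← abs_mul, abs_of_pos hv', ← abs_of_pos hw', ← abs_div, abs_of_pos hw']
    congr 1
    field_simp
  rw [hsplit]
  refine (norm_add_le _ _).trans ?_
  rw [norm_smul, norm_smul, norm_inv, norm_norm, Real.norm_eq_abs, hscale, norm_sub_rev v w]
  have := abs_norm_sub_norm_le w v
  calc ‖w‖⁻¹ * ‖w - v‖ + |‖w‖ - ‖v‖| / ‖w‖ ≤ ‖w‖⁻¹ * ‖w - v‖ + ‖w - v‖ / ‖w‖ := by gcongr
    _ = 2 * ‖w - v‖ / ‖w‖ := by ring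

def farPhase (k : ℝ) (x y : R3) : ℂ :=
  Complex.exp (-(Complex.I * k) * (((∑ j, x j * y j) / ‖x‖ : ℝ) : ℂ))

def farKernel (k : ℝ) (x y : R3) : ℂ :=
  gRadial k ‖x‖ * farPhase k x y

lemma sum_mul_eq_inner (x y : R3) : ∑ j, x j * y j = inner ℝ x y := by
  simp [PiLp.inner_apply, mul_comm]

lemma norm_farKernel (k : ℝ) (x y : R3) : ‖farKernel k x y‖ = (4 * π * ‖x‖)⁻¹ := by
  simp [farKernel, farPhase, norm_gRadial, Complex.norm_exp]

lemma continuous_farKernel (k : ℝ) (x : R3) : Continuous (farKernel k x) := by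
  unfold farKernel farPhase
  fun_prop

section FarField

variable {k M : ℝ} {x y : R3}

lemma norm_g_sub_farKernel_le (hk : 0 ≤ k) (hM : 0 < M) (hy : ‖y‖ ≤ M) (hx : 2 * M ≤ ‖x‖) :
    ‖g k x y - farKernel k x y‖ ≤ (2 * M + k * M ^ 2) / (4 * π * ‖x‖ ^ 2) := by
  have hR : 0 < ‖x‖ := by linarith
  have hRr : |‖x‖ - ‖x - y‖| ≤ M := by
    simpa using (abs_norm_sub_norm_le x (x - y)).trans (by simpa using hy)
  have hr : ‖x‖ / 2 ≤ ‖x - y‖ := by linarith [abs_le.mp hRr]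
  have hphase : |‖x - y‖ - (‖x‖ - inner ℝ x y / ‖x‖)| ≤ M ^ 2 / ‖x‖ :=
    (abs_norm_sub_sub_inner_div_le (by linarith)).trans (by gcongr)
  have hdist : |‖x‖ - ‖x - y‖| / ‖x - y‖ ≤ 2 * M / ‖x‖ := by
    rw [div_le_div_iff₀ (by linarith) hR]
    nlinarith
  rw [g_eq_gRadial, farKernel, farPhase, sum_mul_eq_inner]
  refine (norm_gRadial_sub_gRadial_mul_exp_le hk (by linarith) hR _).trans ?_
  calc _ ≤ (2 * M / ‖x‖ + k * (M ^ 2 / ‖x‖)) / (4 * π * ‖x‖) := by gcongr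
    _ = _ := by field_simp

lemma norm_gGrad_single_sub_farKernel_le (hk : 0 ≤ k) (hM : 0 < M) (hy : ‖y‖ ≤ M)
    (hx : 2 * M ≤ ‖x‖) (i : Fin 3) :
    ‖gGrad k x y (EuclideanSpace.single i 1)
        - Complex.I * k * ((x i / ‖x‖ : ℝ) : ℂ) * farKernel k x y‖
      ≤ (k * (4 * M + k * M ^ 2) + 4) / (4 * π * ‖x‖ ^ 2) := by
  have hR : 0 < ‖x‖ := by linarith
  have hr : ‖x‖ / 2 ≤ ‖x - y‖ := by linarith [norm_sub_norm_le x y]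
  have hr0 : 0 < ‖x - y‖ := by linarith
  have hcoord : |(x i - y i) / ‖x - y‖| ≤ 1 := by
    rw [abs_div, abs_of_pos hr0, div_le_one hr0]
    simpa using PiLp.norm_apply_le (x - y) i
  have hdir : |(x i - y i) / ‖x - y‖ - x i / ‖x‖| ≤ 2 * M / ‖x‖ := by
    have := (PiLp.norm_apply_le (‖x - y‖⁻¹ • (x - y) - ‖x‖⁻¹ • x) i).trans
      (norm_inv_norm_smul_sub_inv_norm_smul_le (norm_pos_iff.mp hr0) (norm_pos_iff.mp hR))
    simp only [sub_sub_cancel_left, norm_neg] at this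
    refine le_trans ?_ (this.trans (by gcongr))
    simp [div_eq_inv_mul]
  rw [gGrad_single]
  refine (norm_mul_gRadialDeriv_sub_le hk hr0 hcoord _).trans ?_
  rw [norm_farKernel, ← g_eq_gRadial]
  have hr2 : (4 * π * ‖x - y‖ ^ 2)⁻¹ ≤ 4 / (4 * π * ‖x‖ ^ 2) := by
    have hsq : ‖x‖ ^ 2 ≤ 4 * ‖x - y‖ ^ 2 := by nlinarith
    rw [inv_eq_one_div, div_le_div_iff₀ (by positivity) (by positivity)]
    nlinarith [mul_le_mul_of_nonneg_left hsq Real.pi_pos.le]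
  calc _ ≤ k * ((2 * M + k * M ^ 2) / (4 * π * ‖x‖ ^ 2) + 2 * M / ‖x‖ * (4 * π * ‖x‖)⁻¹)
        + 4 / (4 * π * ‖x‖ ^ 2) := by
        gcongr
        exact norm_g_sub_farKernel_le hk hM hy hx
    _ = _ := by field_simp; ring

end FarField

lemma norm_integral_mul_sub_integral_mul_le {α : Type*} [MeasurableSpace α] {μ : Measure α}
    {K L φ : α → ℂ} {c : ℝ} (hK : Integrable (fun y => K y * φ y) μ)
    (hL : Integrable (fun y => L y * φ y) μ) (hφ : Integrable φ μ)
    (hKL : ∀ᵐ y ∂μ, ‖K y - L y‖ ≤ c) :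
    ‖(∫ y, K y * φ y ∂μ) - ∫ y, L y * φ y ∂μ‖ ≤ c * ∫ y, ‖φ y‖ ∂μ := by
  rw [← integral_sub hK hL, ← integral_const_mul]
  refine norm_integral_le_of_norm_le (hφ.norm.const_mul c) (hKL.mono fun y hy => ?_)
  rw [← sub_mul, norm_mul]
  exact mul_le_mul_of_nonneg_right hy (norm_nonneg _)

section Potentials

variable {k M : ℝ} {D : Set R3} {φ : R3 → ℂ} {x : R3}

lemma integrableOn_mul_of_continuousOn_closedBall (hDM : D ⊆ Metric.closedBall 0 M)
    (hφ : ContinuousOn φ (Metric.closedBall 0 M)) {K : R3 → ℂ}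
    (hK : ContinuousOn K (Metric.closedBall 0 M)) : IntegrableOn (fun y => K y * φ y) D :=
  ((hK.mul hφ).integrableOn_compact (isCompact_closedBall 0 M)).mono_set hDM

lemma norm_integral_g_mul_sub_le (hk : 0 ≤ k) (hM : 0 < M) (hD : MeasurableSet D)
    (hDM : D ⊆ Metric.closedBall 0 M) (hφ : ContinuousOn φ (Metric.closedBall 0 M))
    (hx : 2 * M ≤ ‖x‖) :
    ‖(∫ y in D, g k x y * φ y) - gRadial k ‖x‖ * ∫ y in D, farPhase k x y * φ y‖
      ≤ (2 * M + k * M ^ 2) / (4 * π * ‖x‖ ^ 2) * ∫ y in D, ‖φ y‖ := by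
  have hxK : x ∉ Metric.closedBall 0 M := by
    rw [mem_closedBall_zero_iff]; linarith
  rw [← integral_const_mul]
  simp only [← mul_assoc]
  refine norm_integral_mul_sub_integral_mul_le
    (integrableOn_mul_of_continuousOn_closedBall hDM hφ (continuousOn_g k hxK))
    (integrableOn_mul_of_continuousOn_closedBall hDM hφ (continuous_farKernel k x).continuousOn)
    ((hφ.integrableOn_compact (isCompact_closedBall 0 M)).mono_set hDM)
    (ae_restrict_of_forall_mem hD fun y hy => norm_g_sub_farKernel_le hk hM ?_ hx)
  simpa using hDM hy

lemma norm_pd_integral_g_mul_sub_le (hk : 0 ≤ k) (hM : 0 < M) (hD : MeasurableSet D)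
    (hDM : D ⊆ Metric.closedBall 0 M) (hφ : ContinuousOn φ (Metric.closedBall 0 M))
    (hx : 2 * M ≤ ‖x‖) (i : Fin 3) :
    ‖pd i (fun z => ∫ y in D, g k z y * φ y) x
        - gRadial k ‖x‖ * (Complex.I * k * ((x i / ‖x‖ : ℝ) : ℂ) * ∫ y in D, farPhase k x y * φ y)‖
      ≤ (k * (4 * M + k * M ^ 2) + 4) / (4 * π * ‖x‖ ^ 2) * ∫ y in D, ‖φ y‖ := by
  have hxK : x ∉ Metric.closedBall 0 M := by
    rw [mem_closedBall_zero_iff]; linarith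
  have hfar : gRadial k ‖x‖ * (Complex.I * k * ((x i / ‖x‖ : ℝ) : ℂ) *
        ∫ y in D, farPhase k x y * φ y)
      = ∫ y in D, Complex.I * k * ((x i / ‖x‖ : ℝ) : ℂ) * farKernel k x y * φ y := by
    rw [← integral_const_mul, ← integral_const_mul]
    congr with y
    rw [farKernel]
    ring
  rw [pd_integral_g_mul k hD (isCompact_closedBall 0 M) hDM hφ hxK i, hfar]
  refine norm_integral_mul_sub_integral_mul_le
    (integrableOn_mul_of_continuousOn_closedBall hDM hφ
      ((continuousOn_gGrad k hxK).clm_apply continuousOn_const))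
    (integrableOn_mul_of_continuousOn_closedBall hDM hφ
      (continuous_const.mul (continuous_farKernel k x)).continuousOn)
    ((hφ.integrableOn_compact (isCompact_closedBall 0 M)).mono_set hDM)
    (ae_restrict_of_forall_mem hD fun y hy => norm_gGrad_single_sub_farKernel_le hk hM ?_ hx i)
  simpa using hDM hy

end Potentials

theorem far_field_expansion_general
    (k : ℝ) (hk : 0 < k) (D : Set R3) (hD : IsOpen D) (hDb : Bornology.IsBounded D)
    (F : R3 → Fin 3 → ℂ) (h : R3 → ℂ) (hF : Continuous F) (hh : Continuous h) :
    ∃ C > (0 : ℝ), ∃ R₁ > (0 : ℝ), ∀ x : R3, R₁ ≤ ‖x‖ →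
      ‖(fun i : Fin 3 =>
          (∫ y in D, g k x y * F y i)
            + pd i (fun z => ∫ y in D, g k z y * h y) x)
        - (fun i : Fin 3 =>
          Complex.exp (Complex.I * (k : ℂ) * (‖x‖ : ℝ)) / (4 * (Real.pi : ℂ) * (‖x‖ : ℝ))
            * ((∫ y in D,
                  Complex.exp (-(Complex.I * (k : ℂ)) * (((∑ j, x j * y j) / ‖x‖ : ℝ) : ℂ))
                    * F y i)
               + Complex.I * (k : ℂ) * ((x i / ‖x‖ : ℝ) : ℂ) *
                 ∫ y in D,
                   Complex.exp (-(Complex.I * (k : ℂ)) * (((∑ j, x j * y j) / ‖x‖ : ℝ) : ℂ))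
                     * h y))‖
        ≤ C / ‖x‖ ^ 2 := by
  obtain ⟨M, hM, hDM⟩ : ∃ M > 0, D ⊆ Metric.closedBall 0 M := by
    obtain ⟨M, hDM⟩ := hDb.subset_closedBall 0
    exact ⟨max M 1, by positivity,
      hDM.trans (Metric.closedBall_subset_closedBall (le_max_left _ _))⟩
  set cF := (2 * M + k * M ^ 2) / (4 * π) with hcF
  set ch := (k * (4 * M + k * M ^ 2) + 4) / (4 * π) with hch
  refine ⟨cF * ∑ j, (∫ y in D, ‖F y j‖) + ch * (∫ y in D, ‖h y‖) + 1, by positivity,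
    2 * M, by positivity, fun x hx => (pi_norm_le_iff_of_nonneg (by positivity)).mpr fun i => ?_⟩
  have hFi := norm_integral_g_mul_sub_le (φ := fun y => F y i) hk.le hM hD.measurableSet hDM
    ((continuous_apply i).comp hF).continuousOn hx
  have hhi := norm_pd_integral_g_mul_sub_le hk.le hM hD.measurableSet hDM hh.continuousOn hx i
  have hFsum : ∫ y in D, ‖F y i‖ ≤ ∑ j, ∫ y in D, ‖F y j‖ :=
    Finset.single_le_sum (f := fun j => ∫ y in D, ‖F y j‖)
      (fun j _ => integral_nonneg fun _ => norm_nonneg _) (Finset.mem_univ i)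
  rw [Pi.sub_apply, show ∀ a p c u v : ℂ, a + p - c * (u + v) = (a - c * u) + (p - c * v) from
    fun _ _ _ _ _ => by ring]
  refine (norm_add_le _ _).trans ((add_le_add hFi hhi).trans ?_)
  calc _ = (cF * (∫ y in D, ‖F y i‖) + ch * ∫ y in D, ‖h y‖) / ‖x‖ ^ 2 := by
        rw [hcF, hch]; ring
    _ ≤ _ := by
        refine div_le_div_of_nonneg_right ?_ (by positivity)
        linarith [mul_le_mul_of_nonneg_left hFsum (by positivity : 0 ≤ cF)]

theorem far_field_expansion
    (k : ℝ) (hk : 0 < k) (D : Set R3) (hD : IsOpen D) (hDb : Bornology.IsBounded D)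
    (F : R3 → Fin 3 → ℂ) (h : R3 → ℂ) (hF : Continuous F) (hh : Continuous h)
    (hFs : Function.support F ⊆ D) (hhs : Function.support h ⊆ D) :
    ∃ C > (0 : ℝ), ∃ R₁ > (0 : ℝ), ∀ x : R3, R₁ ≤ ‖x‖ →
      ‖(fun i : Fin 3 =>
          (∫ y in D, g k x y * F y i)
            + pd i (fun z => ∫ y in D, g k z y * h y) x)
        - (fun i : Fin 3 =>
          Complex.exp (Complex.I * (k : ℂ) * (‖x‖ : ℝ)) / (4 * (Real.pi : ℂ) * (‖x‖ : ℝ))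
            * ((∫ y in D,
                  Complex.exp (-(Complex.I * (k : ℂ)) * (((∑ j, x j * y j) / ‖x‖ : ℝ) : ℂ))
                    * F y i)
               + Complex.I * (k : ℂ) * ((x i / ‖x‖ : ℝ) : ℂ) *
                 ∫ y in D,
                   Complex.exp (-(Complex.I * (k : ℂ)) * (((∑ j, x j * y j) / ‖x‖ : ℝ) : ℂ))
                     * h y))‖
        ≤ C / ‖x‖ ^ 2 :=
  far_field_expansion_general k hk D hD hDb F h hF hh
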